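/- arXiv:0807.2423 — 5 statements merged into one kernel-verified Lean document; each statement's English description precedes it below -/
import Mathlib

section
/- For the explicit infinite matrices X₀, X₁, X₂ of the given representation, the following algebraic relations hold: X₁X₀ = X₁ + X₀, X₁X₂ = X₂, X₂X₀ = X₂, and moreover X₂ = X₁X₀ − X₀X₁. -/
open scoped BigOperators Classical
open Filter Topology

noncomputable section

namespace TASEP

/-- The matrix `X₀`: ones on the diagonal and the subdiagonal. -/
def X0 : ℕ → ℕ → ℝ := fun i k => if k = i ∨ k + 1 = i then 1 else 0

/-- The matrix `X₁`: ones on the diagonal and the superdiagonal. -/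
def X1 : ℕ → ℕ → ℝ := fun i k => if k = i ∨ k = i + 1 then 1 else 0

/-- The matrix `X₂`: a single one in the `(0,0)` entry. -/
def X2 : ℕ → ℕ → ℝ := fun i k => if i = 0 ∧ k = 0 then 1 else 0

/-- The matrix associated to a species label (`0` = hole, `1` = first class
particle, `2` = second class particle). -/
def Xmat : Fin 3 → ℕ → ℕ → ℝ
  | 0 => X0
  | 1 => X1
  | 2 => X2

/-- Product of two infinite matrices (well defined here since the relevant
matrices have finitely many nonzero entries in each row and column). -/
def mul (A B : ℕ → ℕ → ℝ) : ℕ → ℕ → ℝ := fun i k => ∑' j, A i j * B j k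

/-- The row vector `⟨W_α|`, with `i`-th entry `((1-α)/α)^i`. -/
def W (α : ℝ) : ℕ → ℝ := fun i => ((1 - α) / α) ^ i

/-- The column vector `|V_β⟩`, with `i`-th entry `((1-β)/β)^i`. -/
def V (β : ℝ) : ℕ → ℝ := fun i => ((1 - β) / β) ^ i

/-- Row vector times matrix. -/
def rowMul (v : ℕ → ℝ) (A : ℕ → ℕ → ℝ) : ℕ → ℝ := fun k => ∑' i, v i * A i k

/-- Matrix times column vector. -/
def colMul (A : ℕ → ℕ → ℝ) (v : ℕ → ℝ) : ℕ → ℝ := fun i => ∑' k, A i k * v k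

/-- Row vector times a word of matrices. -/
def rowWord (v : ℕ → ℝ) : List (Fin 3) → ℕ → ℝ
  | [] => v
  | a :: rest => rowWord (rowMul v (Xmat a)) rest

/-- Matrix element `⟨v| X_{σ₁} ⋯ X_{σ_p} |w⟩` of a word of matrices. -/
def pairing (v : ℕ → ℝ) (word : List (Fin 3)) (w : ℕ → ℝ) : ℝ :=
  ∑' i, rowWord v word i * w i

/-- Weight `w^{α,β}(τ) = ⟨W_α| X_{τ₁} ⋯ X_{τ_L} |V_β⟩` of a configuration. -/
def wt (α β : ℝ) {L : ℕ} (τ : Fin L → Fin 3) : ℝ :=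
  pairing (W α) (List.ofFn τ) (V β)

/-- Number of second class particles in a configuration. -/
def numTwos {L : ℕ} (τ : Fin L → Fin 3) : ℕ :=
  (Finset.univ.filter fun i => τ i = 2).card

/-- `Y L n`: configurations of length `L` with exactly `n` second class particles. -/
def Y (L n : ℕ) : Finset (Fin L → Fin 3) :=
  Finset.univ.filter fun τ => numTwos τ = n

/-- The partition function `Z^{α,β}(L,n)`. -/
def Z (α β : ℝ) (L n : ℕ) : ℝ := ∑ τ ∈ Y L n, wt α β τ

/-- Value of a configuration at the 1-based site `s` (defaulting to `0` off the lattice). -/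
def val {L : ℕ} (τ : Fin L → Fin 3) (s : ℕ) : Fin 3 :=
  if h : 1 ≤ s ∧ s ≤ L then τ ⟨s - 1, by omega⟩ else 0

/-- `E α β L n r sites j` is `E_r(L,n;i₁,…,i_r;j)`: the sum of weights of
configurations in `Y L n` with a first class particle at each of the sites
`i₁,…,i_{r-1}` and a block of `j` consecutive first class particles starting
at site `i_r`. -/
def E (α β : ℝ) (L n r : ℕ) (sites : Fin r → ℕ) (j : ℕ) : ℝ :=
  ∑ τ ∈ (Y L n).filter (fun τ =>
      (∀ m : Fin r, (m : ℕ) + 1 ≠ r → val τ (sites m) = 1) ∧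
      (∀ m : Fin r, (m : ℕ) + 1 = r → ∀ t ∈ Finset.range j, val τ (sites m + t) = 1)),
    wt α β τ

lemma mul_apply_eq_sum {A : ℕ → ℕ → ℝ} {i : ℕ} (s : Finset ℕ)
    (hA : ∀ j ∉ s, A i j = 0) (B : ℕ → ℕ → ℝ) (k : ℕ) :
    mul A B i k = ∑ j ∈ s, A i j * B j k :=
  tsum_eq_sum fun j hj => by rw [hA j hj, zero_mul]

lemma mul_X1_left (B : ℕ → ℕ → ℝ) (i k : ℕ) : mul X1 B i k = B i k + B (i + 1) k := by
  rw [mul_apply_eq_sum {i, i + 1} fun j hj => by simp_all [X1],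
    Finset.sum_pair (Nat.succ_ne_self i).symm]
  simp [X1]

lemma mul_X0_left (B : ℕ → ℕ → ℝ) (i k : ℕ) :
    mul X0 B i k = B i k + if i = 0 then 0 else B (i - 1) k := by
  have hrow : ∀ j ∉ ({i, i - 1} : Finset ℕ), X0 i j = 0 := fun j hj => by
    simp only [Finset.mem_insert, Finset.mem_singleton] at hj
    simp [X0]
    omega
  rw [mul_apply_eq_sum _ hrow]
  rcases Nat.eq_zero_or_pos i with rfl | hi
  · simp [X0]
  · rw [Finset.sum_pair (by omega)]
    simp [X0, hi.ne', show i - 1 + 1 = i by omega]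

lemma mul_X2_left (B : ℕ → ℕ → ℝ) (i k : ℕ) :
    mul X2 B i k = if i = 0 then B 0 k else 0 := by
  rw [mul_apply_eq_sum {0} fun j hj => by simp_all [X2], Finset.sum_singleton]
  simp [X2]

lemma mul_X1_X0 : mul X1 X0 = fun i k => X1 i k + X0 i k := by
  funext i k
  rw [mul_X1_left]
  simp only [X0, X1]
  split_ifs <;> simp_all

lemma mul_X1_X2 : mul X1 X2 = X2 := by
  funext i k
  rw [mul_X1_left]
  simp only [X2]
  split_ifs <;> simp_all

lemma mul_X2_X0 : mul X2 X0 = X2 := by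
  funext i k
  rw [mul_X2_left]
  simp only [X0, X2]
  split_ifs <;> simp_all

lemma mul_X0_X1 : mul X0 X1 = fun i k => X1 i k + X0 i k - X2 i k := by
  funext i k
  rw [mul_X0_left]
  simp only [X0, X1, X2]
  split_ifs <;> simp_all <;> omega

/-- the algebraic relations `X₁X₀ = X₁ + X₀`, `X₁X₂ = X₂`,
`X₂X₀ = X₂`, and `X₂ = X₁X₀ − X₀X₁` for the explicit infinite matrices. -/
theorem matrix_algebra_relations :
    (mul X1 X0 = fun i k => X1 i k + X0 i k) ∧
    (mul X1 X2 = X2) ∧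
    (mul X2 X0 = X2) ∧
    (X2 = fun i k => mul X1 X0 i k - mul X0 X1 i k) := by
  refine ⟨mul_X1_X0, mul_X1_X2, mul_X2_X0, ?_⟩
  rw [mul_X1_X0, mul_X0_X1]
  funext i k
  ring

end TASEP
end
end

section
/- For all α, β ∈ (0,1], the explicit row vector ⟨W_α| and column vector |V_β⟩ satisfy: ⟨W_α|X₀ = (1/α)⟨W_α|, X₁|V_β⟩ = (1/β)|V_β⟩, X₂|V_β⟩ = |V₁⟩, ⟨W_α|X₂ = ⟨W₁|, and ⟨W_α|V₁⟩ = ⟨W₁|V_β⟩ = 1, where ⟨W₁| and |V₁⟩ are the α = 1 and β = 1 instances (both equal to the coordinate vector e₀). -/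
open scoped BigOperators Classical
open Filter Topology

noncomputable section

/-!
Both boundary vectors are geometric sequences `i ↦ rⁱ` with `r = (1 - α)/α`, so `1 + r = 1/α`.
Each column of `X₀` and each row of `X₁` has exactly two adjacent ones, hence both matrices
multiply a geometric sequence by `1 + r`. For `α = 1` we get `r = 0`, and the vector is `e₀`.
-/

namespace TASEP

lemma rowMul_X0_apply (v : ℕ → ℝ) (k : ℕ) : rowMul v X0 k = v k + v (k + 1) := by
  rw [rowMul, tsum_eq_sum (s := {k, k + 1}), Finset.sum_pair (by omega)]
  · simp [X0]
  · intro i hi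
    simp only [Finset.mem_insert, Finset.mem_singleton, not_or] at hi
    simp only [X0, if_neg (show ¬(k = i ∨ k + 1 = i) by omega), mul_zero]

lemma colMul_X1_apply (v : ℕ → ℝ) (i : ℕ) : colMul X1 v i = v i + v (i + 1) := by
  rw [colMul, tsum_eq_sum (s := {i, i + 1}), Finset.sum_pair (by omega)]
  · simp [X1]
  · intro k hk
    simp only [Finset.mem_insert, Finset.mem_singleton, not_or] at hk
    simp only [X1, if_neg (show ¬(k = i ∨ k = i + 1) by omega), zero_mul]

lemma rowMul_X2 (v : ℕ → ℝ) : rowMul v X2 = Pi.single 0 (v 0) := by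
  funext k
  rw [rowMul, tsum_eq_single 0 fun i hi => by simp [X2, hi]]
  rcases eq_or_ne k 0 with rfl | hk <;> simp [X2, *]

lemma colMul_X2 (v : ℕ → ℝ) : colMul X2 v = Pi.single 0 (v 0) := by
  funext i
  rw [colMul, tsum_eq_single 0 fun k hk => by simp [X2, hk]]
  rcases eq_or_ne i 0 with rfl | hi <;> simp [X2, *]

lemma rowMul_X0_geom (r : ℝ) : rowMul (fun i => r ^ i) X0 = fun k => (1 + r) * r ^ k := by
  funext k
  rw [rowMul_X0_apply, pow_succ']
  ring

lemma colMul_X1_geom (r : ℝ) : colMul X1 (fun i => r ^ i) = fun i => (1 + r) * r ^ i := by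
  funext i
  rw [colMul_X1_apply, pow_succ']
  ring

lemma one_add_one_sub_div {α : ℝ} (hα : α ≠ 0) : 1 + (1 - α) / α = 1 / α := by
  field_simp
  ring

lemma W_zero (α : ℝ) : W α 0 = 1 := pow_zero _

lemma V_zero (β : ℝ) : V β 0 = 1 := pow_zero _

lemma W_one : W 1 = Pi.single 0 1 := by
  funext i
  rcases eq_or_ne i 0 with rfl | hi <;> simp [W, *]

lemma V_one : V 1 = Pi.single 0 1 := W_one

lemma tsum_mul_single_one (v : ℕ → ℝ) (j : ℕ) : ∑' i, v i * (Pi.single j 1 : ℕ → ℝ) i = v j := by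
  simp [Pi.single_apply]

lemma tsum_single_one_mul (v : ℕ → ℝ) (j : ℕ) : ∑' i, (Pi.single j 1 : ℕ → ℝ) i * v i = v j := by
  simp [Pi.single_apply]

/-- boundary vector relations: `⟨W_α|X₀ = (1/α)⟨W_α|`,
`X₁|V_β⟩ = (1/β)|V_β⟩`, `X₂|V_β⟩ = |V₁⟩`, `⟨W_α|X₂ = ⟨W₁|`, and
`⟨W_α|V₁⟩ = ⟨W₁|V_β⟩ = 1`, for all `α, β ∈ (0,1]`. -/
theorem boundary_vector_relations (α β : ℝ)
    (hα : α ∈ Set.Ioc (0 : ℝ) 1) (hβ : β ∈ Set.Ioc (0 : ℝ) 1) :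
    (rowMul (W α) X0 = fun k => (1 / α) * W α k) ∧
    (colMul X1 (V β) = fun i => (1 / β) * V β i) ∧
    (colMul X2 (V β) = V 1) ∧
    (rowMul (W α) X2 = W 1) ∧
    (∑' i, W α i * V 1 i) = 1 ∧
    (∑' i, W 1 i * V β i) = 1 := by
  refine ⟨?_, ?_, ?_, ?_, ?_, ?_⟩
  · have := rowMul_X0_geom ((1 - α) / α)
    rwa [one_add_one_sub_div hα.1.ne'] at this
  · have := colMul_X1_geom ((1 - β) / β)
    rwa [one_add_one_sub_div hβ.1.ne'] at this
  · rw [colMul_X2, V_zero, V_one]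
  · rw [rowMul_X2, W_zero, W_one]
  · rw [V_one, tsum_mul_single_one, W_zero]
  · rw [W_one, tsum_single_one_mul, V_zero]

end TASEP
end
end

section
/- Let 0 < n < L, let m ≥ 1, let 1 ≤ j₁ < j₂ < ⋯ < j_m ≤ n, and let 1 ≤ q₁ < q₂ < ⋯ < q_m ≤ L. Then the sum of the weights w^{α,β}(τ) over all τ ∈ Y_{L,n} such that, for each i = 1,…,m, the j_i-th entry equal to 2 (counting from the left) is at position q_i, equals the product Z^{α,1}(q₁−1, j₁−1) · ∏_{i=2}^{m} Z^{1,1}(q_i − q_{i−1} − 1, j_i − j_{i−1} − 1) · Z^{1,β}(L − q_m, n − j_m), where by convention Z^{α,β}(ℓ,k) = 0 if k > ℓ or k < 0. -/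
open scoped BigOperators Classical
open Filter Topology

noncomputable section

/-! Since `X₂ = |e₀⟩⟨e₀|` while `⟨W₁| = ⟨e₀|` and `|V₁⟩ = |e₀⟩`, a weight factorizes at every
second class particle: `⟨W_α| U X₂ T |V_β⟩ = ⟨W_α| U |V₁⟩ ⟨W₁| T |V_β⟩`. Cutting a configuration
at its `j_m`-th second class particle, which sits at site `q_m`, splits the constrained sum into
the constrained sum for the first `m - 1` particles on `q_m - 1` sites with boundary parameters
`(α, 1)`, times `Z^{1,β}(L - q_m, n - j_m)`; induction on `m` gives the product. -/

namespace TASEP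

lemma rowWord_append (v : ℕ → ℝ) (u t : List (Fin 3)) :
    rowWord v (u ++ t) = rowWord (rowWord v u) t := by
  induction u generalizing v with
  | nil => rfl
  | cons a u ih => exact ih (rowMul v (Xmat a))

lemma rowMul_smul (c : ℝ) (f : ℕ → ℝ) (A : ℕ → ℕ → ℝ) :
    rowMul (c • f) A = c • rowMul f A := by
  ext k
  simp only [rowMul, Pi.smul_apply, smul_eq_mul, mul_assoc]
  exact tsum_mul_left

lemma rowWord_smul (c : ℝ) (f : ℕ → ℝ) (t : List (Fin 3)) :
    rowWord (c • f) t = c • rowWord f t := by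
  induction t generalizing f with
  | nil => rfl
  | cons a t ih => rw [rowWord, rowMul_smul, ih]; rfl

lemma rowMul_X2_s3 (f : ℕ → ℝ) : rowMul f X2 = f 0 • W 1 := by
  ext k
  rw [rowMul, tsum_eq_single 0 fun i hi => by simp [X2, hi]]
  cases k <;> simp [X2, W_one]

lemma pairing_V_one (v : ℕ → ℝ) (u : List (Fin 3)) :
    pairing v u (V 1) = rowWord v u 0 := by
  simp [pairing, V_one, Pi.single_apply]

lemma pairing_append_two_cons (v : ℕ → ℝ) (u t : List (Fin 3)) (w : ℕ → ℝ) :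
    pairing v (u ++ 2 :: t) w = pairing v u (V 1) * pairing (W 1) t w := by
  rw [pairing, rowWord_append, rowWord, show Xmat 2 = X2 from rfl, rowMul_X2_s3, rowWord_smul,
    pairing_V_one, pairing]
  simp only [Pi.smul_apply, smul_eq_mul, mul_assoc]
  exact tsum_mul_left

/-- The number of second class particles on the 1-based sites `1, …, s`. -/
def twosUpTo {L : ℕ} (s : ℕ) (τ : Fin L → Fin 3) : ℕ :=
  (Finset.univ.filter (fun t : Fin L => (t : ℕ) < s ∧ τ t = 2)).card

/-- For each `i = 1, …, m`, the `j i`-th second class particle of `τ` sits at site `q i`. -/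
def PlacesTwos (j q : ℕ → ℕ) (m : ℕ) {L : ℕ} (τ : Fin L → Fin 3) : Prop :=
  ∀ i, 1 ≤ i → i ≤ m → twosUpTo (q i) τ = j i ∧ val τ (q i) = 2

/- The instance inferred for the unfolded predicate, so that the filter in the main theorem is
definitionally a filter by `PlacesTwos`. -/
instance (j q : ℕ → ℕ) (m : ℕ) {L : ℕ} : DecidablePred (PlacesTwos j q m (L := L)) :=
  fun τ => inferInstanceAs
    (Decidable (∀ i, 1 ≤ i → i ≤ m → twosUpTo (q i) τ = j i ∧ val τ (q i) = 2))

lemma placesTwos_succ_iff {j q : ℕ → ℕ} {m L : ℕ} (τ : Fin L → Fin 3) :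
    PlacesTwos j q (m + 1) τ ↔
      PlacesTwos j q m τ ∧ twosUpTo (q (m + 1)) τ = j (m + 1) ∧ val τ (q (m + 1)) = 2 :=
  ⟨fun h => ⟨fun i hi him => h i hi (by omega), h (m + 1) (by omega) le_rfl⟩,
    fun ⟨h, hlast⟩ i hi him => (Nat.lt_or_eq_of_le him).elim
      (fun him => h i hi (by omega)) (fun him => him ▸ hlast)⟩

lemma val_succ_eq {L : ℕ} (τ : Fin L → Fin 3) (s : ℕ) (hs : s < L) :
    val τ (s + 1) = τ ⟨s, hs⟩ := by
  rw [val, dif_pos ⟨by omega, hs⟩]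
  rfl

section Glue

variable {a b : ℕ}

/-- The configuration `σl 2 σr`, with the second class particle at the 1-based site `a + 1`. -/
def glue (σl : Fin a → Fin 3) (σr : Fin b → Fin 3) : Fin (a + 1 + b) → Fin 3 :=
  Fin.append (Fin.append σl ![2]) σr

def unglue (τ : Fin (a + 1 + b) → Fin 3) : (Fin a → Fin 3) × (Fin b → Fin 3) :=
  (fun i => τ (Fin.castAdd b (Fin.castAdd 1 i)), fun i => τ (Fin.natAdd (a + 1) i))

lemma unglue_glue (σl : Fin a → Fin 3) (σr : Fin b → Fin 3) :
    unglue (glue σl σr) = (σl, σr) := by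
  simp [unglue, glue]

lemma glue_unglue (τ : Fin (a + 1 + b) → Fin 3) (h : val τ (a + 1) = 2) :
    glue (unglue τ).1 (unglue τ).2 = τ := by
  rw [val_succ_eq τ a (by omega)] at h
  conv_rhs => rw [← Fin.append_castAdd_natAdd (f := τ),
    ← Fin.append_castAdd_natAdd (f := fun i => τ (Fin.castAdd b i))]
  unfold glue unglue
  congr 2
  funext i
  rw [Fin.fin_one_eq_zero i, ← h]
  rfl

lemma ofFn_glue (σl : Fin a → Fin 3) (σr : Fin b → Fin 3) :
    List.ofFn (glue σl σr) = List.ofFn σl ++ 2 :: List.ofFn σr := by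
  rw [glue, List.ofFn_fin_append, List.ofFn_fin_append]
  simp

lemma wt_glue (α β : ℝ) (σl : Fin a → Fin 3) (σr : Fin b → Fin 3) :
    wt α β (glue σl σr) = wt α 1 σl * wt 1 β σr := by
  rw [wt, ofFn_glue, pairing_append_two_cons]
  rfl

lemma sum_glue {M : Type*} [AddCommMonoid M] (f : ℕ → Fin 3 → M)
    (σl : Fin a → Fin 3) (σr : Fin b → Fin 3) :
    ∑ t : Fin (a + 1 + b), f t (glue σl σr t)
      = ∑ t : Fin a, f t (σl t) + f a 2 + ∑ t : Fin b, f (a + 1 + t) (σr t) := by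
  simp [Fin.sum_univ_add, glue, add_assoc]

lemma numTwos_glue (σl : Fin a → Fin 3) (σr : Fin b → Fin 3) :
    numTwos (glue σl σr) = numTwos σl + 1 + numTwos σr := by
  simp only [numTwos, Finset.card_filter]
  rw [sum_glue (fun _ x => if x = 2 then 1 else 0)]
  simp

lemma twosUpTo_glue_of_le (σl : Fin a → Fin 3) (σr : Fin b → Fin 3) {s : ℕ} (hs : s ≤ a) :
    twosUpTo s (glue σl σr) = twosUpTo s σl := by
  simp only [twosUpTo, Finset.card_filter]
  rw [sum_glue (fun t x => if t < s ∧ x = 2 then 1 else 0)]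
  simp [show ¬ a < s by omega, show ∀ t, ¬ a + 1 + t < s by omega]

lemma twosUpTo_glue_succ (σl : Fin a → Fin 3) (σr : Fin b → Fin 3) :
    twosUpTo (a + 1) (glue σl σr) = numTwos σl + 1 := by
  simp only [twosUpTo, numTwos, Finset.card_filter]
  rw [sum_glue (fun t x => if t < a + 1 ∧ x = 2 then 1 else 0)]
  simp [show ∀ t, ¬ a + 1 + t < a + 1 by omega]

lemma val_glue_of_le (σl : Fin a → Fin 3) (σr : Fin b → Fin 3) {s : ℕ} (hs : s ≤ a) :
    val (glue σl σr) s = val σl s := by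
  rcases s with _ | s
  · rfl
  · rw [val_succ_eq _ s (by omega), val_succ_eq _ s hs]
    exact Fin.append_left _ _ (Fin.castAdd 1 ⟨s, hs⟩) |>.trans (Fin.append_left _ _ _)

lemma val_glue_succ (σl : Fin a → Fin 3) (σr : Fin b → Fin 3) :
    val (glue σl σr) (a + 1) = 2 := by
  rw [val_succ_eq _ a (by omega)]
  exact Fin.append_left _ _ (Fin.natAdd a 0) |>.trans (Fin.append_right _ _ 0)

lemma placesTwos_glue_iff {j q : ℕ → ℕ} {m : ℕ} (hq : ∀ i, 1 ≤ i → i ≤ m → q i ≤ a)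
    (σl : Fin a → Fin 3) (σr : Fin b → Fin 3) :
    PlacesTwos j q m (glue σl σr) ↔ PlacesTwos j q m σl := by
  refine forall₃_congr fun i hi him => ?_
  rw [twosUpTo_glue_of_le _ _ (hq i hi him), val_glue_of_le _ _ (hq i hi him)]

lemma glue_mem_filter_iff {k l : ℕ} {ρ : (Fin (a + 1 + b) → Fin 3) → Prop}
    {ρ' : (Fin a → Fin 3) → Prop} [DecidablePred ρ] [DecidablePred ρ']
    (hρ : ∀ σl σr, ρ (glue σl σr) ↔ ρ' σl) (σl : Fin a → Fin 3) (σr : Fin b → Fin 3) :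
    glue σl σr ∈ (Y (a + 1 + b) (k + 1 + l)).filter
        (fun τ => ρ τ ∧ twosUpTo (a + 1) τ = k + 1 ∧ val τ (a + 1) = 2) ↔
      (σl, σr) ∈ (Y a k).filter ρ' ×ˢ Y b l := by
  simp only [Y, Finset.mem_filter, Finset.mem_univ, true_and, Finset.mem_product, hρ,
    numTwos_glue, twosUpTo_glue_succ, val_glue_succ, and_true]
  grind

lemma sum_wt_filter_twoAt {k l : ℕ} (α β : ℝ) {ρ : (Fin (a + 1 + b) → Fin 3) → Prop}
    {ρ' : (Fin a → Fin 3) → Prop} [DecidablePred ρ] [DecidablePred ρ']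
    (hρ : ∀ σl σr, ρ (glue σl σr) ↔ ρ' σl) :
    ∑ τ ∈ (Y (a + 1 + b) (k + 1 + l)).filter
        (fun τ => ρ τ ∧ twosUpTo (a + 1) τ = k + 1 ∧ val τ (a + 1) = 2), wt α β τ
      = (∑ σ ∈ (Y a k).filter ρ', wt α 1 σ) * Z 1 β b l := by
  rw [Z, Finset.sum_mul_sum, ← Finset.sum_product']
  symm
  refine Finset.sum_nbij' (fun p => glue p.1 p.2) unglue (fun p hp => ?_) (fun τ hτ => ?_)
    (fun p _ => unglue_glue p.1 p.2) (fun τ hτ => ?_) (fun p _ => (wt_glue α β p.1 p.2).symm)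
  · exact (glue_mem_filter_iff hρ p.1 p.2).2 hp
  · rw [← glue_mem_filter_iff hρ, glue_unglue τ (Finset.mem_filter.1 hτ).2.2.2]
    exact hτ
  · exact glue_unglue τ (Finset.mem_filter.1 hτ).2.2.2

end Glue

lemma sum_wt_placesTwos_succ (α β : ℝ) {L n m : ℕ} {j q : ℕ → ℕ}
    (hj : 1 ≤ j (m + 1)) (hjn : j (m + 1) ≤ n) (hq : 1 ≤ q (m + 1)) (hqL : q (m + 1) ≤ L)
    (hlt : ∀ i, 1 ≤ i → i ≤ m → q i < q (m + 1)) :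
    ∑ τ ∈ (Y L n).filter (PlacesTwos j q (m + 1)), wt α β τ
      = (∑ σ ∈ (Y (q (m + 1) - 1) (j (m + 1) - 1)).filter (PlacesTwos j q m), wt α 1 σ) *
          Z 1 β (L - q (m + 1)) (n - j (m + 1)) := by
  obtain ⟨a, b, rfl, hqa⟩ : ∃ a b, L = a + 1 + b ∧ q (m + 1) = a + 1 :=
    ⟨q (m + 1) - 1, L - q (m + 1), by omega, by omega⟩
  obtain ⟨k, l, rfl, hjk⟩ : ∃ k l, n = k + 1 + l ∧ j (m + 1) = k + 1 :=
    ⟨j (m + 1) - 1, n - j (m + 1), by omega, by omega⟩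
  rw [Finset.filter_congr fun τ _ => by rw [placesTwos_succ_iff, hqa, hjk], hqa, hjk,
    Nat.add_sub_cancel, Nat.add_sub_cancel, Nat.add_sub_cancel_left, Nat.add_sub_cancel_left]
  refine sum_wt_filter_twoAt α β (placesTwos_glue_iff fun i hi him => ?_)
  have := hlt i hi him
  omega

lemma strictMonoOn_Icc_of_lt_add_one {f : ℕ → ℕ} {m : ℕ}
    (h : ∀ i, 1 ≤ i → i < m → f i < f (i + 1)) : StrictMonoOn f (Set.Icc 1 m) :=
  strictMonoOn_of_lt_add_one Set.ordConnected_Icc fun i _ hi hi' =>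
    h i hi.1 (Nat.lt_of_succ_le hi'.2)

theorem second_class_particle_positions_factorize_general (α β : ℝ)
    (L n m : ℕ) (hm : 1 ≤ m)
    (j q : ℕ → ℕ)
    (hj1 : 1 ≤ j 1) (hjmono : ∀ i, 1 ≤ i → i < m → j i < j (i + 1)) (hjn : j m ≤ n)
    (hq1 : 1 ≤ q 1) (hqmono : ∀ i, 1 ≤ i → i < m → q i < q (i + 1)) (hqL : q m ≤ L) :
    ∑ τ ∈ (Y L n).filter (fun τ => ∀ i, 1 ≤ i → i ≤ m →
        ((Finset.univ.filter (fun t : Fin L => (t : ℕ) < q i ∧ τ t = 2)).card = j i ∧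
          val τ (q i) = 2)),
      wt α β τ
    = Z α 1 (q 1 - 1) (j 1 - 1) *
        (∏ i ∈ Finset.Icc 2 m, Z 1 1 (q i - q (i - 1) - 1) (j i - j (i - 1) - 1)) *
        Z 1 β (L - q m) (n - j m) := by
  change ∑ τ ∈ (Y L n).filter (PlacesTwos j q m), wt α β τ = _
  induction m, hm using Nat.le_induction generalizing β L n with
  | base =>
    rw [sum_wt_placesTwos_succ α β hj1 hjn hq1 hqL fun i hi hi0 => by omega,
      Finset.filter_true_of_mem fun τ _ i hi hi0 => by omega]
    simp [Z]
  | succ m hm ih =>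
    have hq := strictMonoOn_Icc_of_lt_add_one hqmono
    have hjm := hjmono m hm (by omega)
    have hqm := hqmono m hm (by omega)
    rw [sum_wt_placesTwos_succ α β (by omega) hjn (by omega) hqL fun i hi him =>
        hq ⟨hi, by omega⟩ ⟨by omega, le_rfl⟩ (by omega),
      ih 1 _ _ (fun i hi him => hjmono i hi (by omega)) (by omega)
        (fun i hi him => hqmono i hi (by omega)) (by omega),
      Finset.prod_Icc_succ_top (by omega), Nat.add_sub_cancel]
    rw [Nat.sub_right_comm (q (m + 1)), Nat.sub_right_comm (j (m + 1))]
    ring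

/-- the sum of weights of configurations whose `jᵢ`-th second
class particle (counting from the left) sits at site `qᵢ`, for `i = 1,…,m`,
factorizes into a product of partition functions. Here `j, q : ℕ → ℕ` are
used with 1-based indices `1,…,m`. -/
theorem second_class_particle_positions_factorize (α β : ℝ)
    (hα : α ∈ Set.Ioc (0 : ℝ) 1) (hβ : β ∈ Set.Ioc (0 : ℝ) 1)
    (L n m : ℕ) (h0n : 0 < n) (hnL : n < L) (hm : 1 ≤ m)
    (j q : ℕ → ℕ)
    (hj1 : 1 ≤ j 1) (hjmono : ∀ i, 1 ≤ i → i < m → j i < j (i + 1)) (hjn : j m ≤ n)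
    (hq1 : 1 ≤ q 1) (hqmono : ∀ i, 1 ≤ i → i < m → q i < q (i + 1)) (hqL : q m ≤ L) :
    ∑ τ ∈ (Y L n).filter (fun τ => ∀ i, 1 ≤ i → i ≤ m →
        ((Finset.univ.filter (fun t : Fin L => (t : ℕ) < q i ∧ τ t = 2)).card = j i ∧
          val τ (q i) = 2)),
      wt α β τ
    = Z α 1 (q 1 - 1) (j 1 - 1) *
        (∏ i ∈ Finset.Icc 2 m, Z 1 1 (q i - q (i - 1) - 1) (j i - j (i - 1) - 1)) *
        Z 1 β (L - q m) (n - j m) :=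
  second_class_particle_positions_factorize_general α β L n m hm j q hj1 hjmono hjn hq1 hqmono hqL

end TASEP
end
end

section
/- Let 0 < n < L, let 1 ≤ i ≤ n, and let 0 ≤ j ≤ L − n. Then E_1(L,n;i;j) = Σ_{k=j}^{L−n} c_{j,k} · Z^{α,β}(L−k, n). -/
open scoped BigOperators Classical
open Filter Topology

noncomputable section

namespace TASEP

/-- The Catalan triangle numbers `C^m_n = binom(m+n,n)·(m−n+1)/(m+1)`. -/
def catC (m n : ℕ) : ℝ := ((m + n).choose n : ℝ) * ((m : ℝ) - (n : ℝ) + 1) / ((m : ℝ) + 1)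

/-- The constants `c_{j,k}`: `c_{j,k} = C^{k−1}_{k−j}` for `j ≥ 1` and
`c_{0,k} = δ_{k,0}`. -/
def cCoeff (j k : ℕ) : ℝ :=
  if j = 0 then (if k = 0 then 1 else 0) else catC (k - 1) (k - j)

/-- The constants `d_{m,j,k}`: for `j ≤ m`,
`d_{m,j,k} = binom(m−j+k,k) − binom(m−j+k,k−j)` (the second binomial taken to
be `0` when `k < j`), and `d_{m,m+1,k} = δ_{k,0}`. -/
def dCoeff (m j k : ℕ) : ℝ :=
  if j ≤ m then
    ((m - j + k).choose k : ℝ) - (if j ≤ k then ((m - j + k).choose (k - j) : ℝ) else 0)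
  else if k = 0 then 1 else 0

end TASEP

/-!
Allow arbitrary boundary vectors `⟨v|`, `|w⟩` and let the block of `j` first class particles start
at any (0-based) site `s < n`. Peeling off the first letter of a configuration, or the first
particle of a block starting at site `0`, and using the bulk relations `X₁X₀ = X₁ + X₀` and
`X₁X₂ = X₂`, gives the recursion `E(L, j) = E(L, j+1) + E(L−1, j−1)` for `1 ≤ j ≤ L − n`. The
coefficients satisfy the matching recursion `c_{j,k} = c_{j+1,k} + c_{j−1,k−1}` (Pascal's rule for
the ballot numbers `C^m_{p+1} = binom(m+p+1, p+1) − binom(m+p+1, p)`), so the formula follows by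
induction on `2L − j` from the boundary cases `j = 0`, where `E = Z`, and `j = L − n + 1`, where
the block and the `n` second class particles no longer fit and `E = 0`.
-/

namespace TASEP

section RowAction

variable (v : ℕ → ℝ)

lemma rowMul_X0 : rowMul v X0 = fun k => v k + v (k + 1) := by
  funext k
  rw [rowMul, tsum_eq_sum (s := {k, k + 1}) fun i hi => ?_, Finset.sum_pair (by omega)]
  · simp [X0]
  · simp only [Finset.mem_insert, Finset.mem_singleton, not_or] at hi
    simp only [X0, mul_eq_zero, ite_eq_right_iff]
    omega

lemma rowMul_X1 : rowMul v X1 = fun k => v k + if k = 0 then 0 else v (k - 1) := by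
  funext k
  rw [rowMul, tsum_eq_sum (s := {k, k - 1}) fun i hi => ?_]
  · rcases Nat.eq_zero_or_pos k with rfl | hk
    · simp [X1]
    · rw [Finset.sum_pair (by omega)]
      simp [X1, Nat.sub_add_cancel hk, hk.ne']
  · simp only [Finset.mem_insert, Finset.mem_singleton, not_or] at hi
    simp only [X1, mul_eq_zero, ite_eq_right_iff]
    omega

lemma rowMul_X2_s10 : rowMul v X2 = fun k => if k = 0 then v 0 else 0 := by
  funext k
  rw [rowMul, tsum_eq_single 0 fun i hi => by simp [X2, hi]]
  simp [X2]

lemma rowMul_X1_X0 : rowMul (rowMul v X1) X0 = rowMul v X1 + rowMul v X0 := by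
  funext k
  rcases k with _ | k <;>
    simp only [rowMul_X0, rowMul_X1, Pi.add_apply, Nat.add_eq_zero_iff, one_ne_zero, and_false,
      ↓reduceIte, add_tsub_cancel_right, tsub_self] <;>
    ring

lemma rowMul_X1_X2 : rowMul (rowMul v X1) X2 = rowMul v X2 := by
  simp [rowMul_X2_s10, rowMul_X1]

lemma rowMul_Xmat_add (w : ℕ → ℝ) (a : Fin 3) :
    rowMul (v + w) (Xmat a) = rowMul v (Xmat a) + rowMul w (Xmat a) := by
  funext k
  fin_cases a <;> simp only [Xmat, rowMul_X0, rowMul_X1, rowMul_X2_s10, Pi.add_apply] <;>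
    (try split_ifs) <;> ring

end RowAction

section Pairing

lemma eventually_rowMul_X2_eq_zero (v : ℕ → ℝ) : ∀ᶠ k in atTop, rowMul v X2 k = 0 := by
  filter_upwards [eventually_ne_atTop 0] with k hk
  simp [rowMul_X2_s10, hk]

lemma eventually_rowMul_eq_zero {v : ℕ → ℝ} (hv : ∀ᶠ k in atTop, v k = 0) (a : Fin 3) :
    ∀ᶠ k in atTop, rowMul v (Xmat a) k = 0 := by
  fin_cases a
  · filter_upwards [hv, (tendsto_add_atTop_nat 1).eventually hv] with k h0 h1
    simp [Xmat, rowMul_X0, h0, h1]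
  · filter_upwards [hv, (tendsto_sub_atTop_nat 1).eventually hv] with k h0 h1
    simp [Xmat, rowMul_X1, h0, h1]
  · exact eventually_rowMul_X2_eq_zero v

lemma eventually_rowWord_eq_zero {v : ℕ → ℝ} (hv : ∀ᶠ k in atTop, v k = 0)
    (l : List (Fin 3)) : ∀ᶠ k in atTop, rowWord v l k = 0 := by
  induction l generalizing v with
  | nil => exact hv
  | cons a l ih => exact ih (eventually_rowMul_eq_zero hv a)

lemma eventually_rowWord_eq_zero_of_two_mem {l : List (Fin 3)} (h : 2 ∈ l) (v : ℕ → ℝ) :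
    ∀ᶠ k in atTop, rowWord v l k = 0 := by
  induction l generalizing v with
  | nil => simp at h
  | cons a l ih =>
    rcases List.mem_cons.mp h with rfl | h
    · exact eventually_rowWord_eq_zero (eventually_rowMul_X2_eq_zero v) l
    · exact ih h _

lemma rowWord_add (v v' : ℕ → ℝ) (l : List (Fin 3)) :
    rowWord (v + v') l = rowWord v l + rowWord v' l := by
  induction l generalizing v v' with
  | nil => rfl
  | cons a l ih => simp only [rowWord, rowMul_Xmat_add, ih]

lemma summable_mul_of_eventually_eq_zero {u : ℕ → ℝ} (hu : ∀ᶠ k in atTop, u k = 0)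
    (w : ℕ → ℝ) : Summable fun k => u k * w k := by
  obtain ⟨N, hN⟩ := eventually_atTop.mp hu
  exact summable_of_ne_finset_zero (s := Finset.range N) fun k hk => by
    simp [hN k (by simpa using hk)]

/-- Words containing `X₂` have finitely supported row vectors, so the pairing is a finite sum. -/
lemma pairing_add {l : List (Fin 3)} (h : 2 ∈ l) (v v' w : ℕ → ℝ) :
    pairing (v + v') l w = pairing v l w + pairing v' l w := by
  simp only [pairing, rowWord_add, Pi.add_apply, add_mul]
  exact (summable_mul_of_eventually_eq_zero (eventually_rowWord_eq_zero_of_two_mem h v) w).tsum_add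
    (summable_mul_of_eventually_eq_zero (eventually_rowWord_eq_zero_of_two_mem h v') w)

end Pairing

section BlockSums

lemma sum_fun_fin_succ {L : ℕ} (F : (Fin (L + 1) → Fin 3) → ℝ) :
    ∑ τ, F τ = ∑ a : Fin 3, ∑ σ : Fin L → Fin 3, F (Fin.cons a σ) :=
  (Fintype.sum_equiv (Fin.consEquiv fun _ => Fin 3) _ F fun _ => rfl).symm.trans
    (Fintype.sum_prod_type _)

lemma numTwos_cons {L : ℕ} (a : Fin 3) (σ : Fin L → Fin 3) :
    numTwos (Fin.cons a σ : Fin (L + 1) → Fin 3) = (if a = 2 then 1 else 0) + numTwos σ := by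
  simp only [numTwos, Finset.card_filter, Fin.sum_univ_succ, Fin.cons_zero, Fin.cons_succ]

lemma sum_Y_succ {L n : ℕ} (F : (Fin (L + 1) → Fin 3) → ℝ) :
    ∑ τ ∈ Y (L + 1) (n + 1), F τ
      = ∑ σ ∈ Y L (n + 1), F (Fin.cons 0 σ) + ∑ σ ∈ Y L (n + 1), F (Fin.cons 1 σ)
        + ∑ σ ∈ Y L n, F (Fin.cons 2 σ) := by
  simp only [Y, Finset.sum_filter, sum_fun_fin_succ, Fin.sum_univ_three, numTwos_cons]
  simp [add_comm 1]

lemma pairing_cons {L : ℕ} (v : ℕ → ℝ) (a : Fin 3) (σ : Fin L → Fin 3) (w : ℕ → ℝ) :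
    pairing v (List.ofFn (Fin.cons a σ : Fin (L + 1) → Fin 3)) w
      = pairing (rowMul v (Xmat a)) (List.ofFn σ) w := by
  simp [List.ofFn_succ, pairing, rowWord]

variable (v w : ℕ → ℝ)

def weightSum (L n : ℕ) : ℝ := ∑ τ ∈ Y L n, pairing v (List.ofFn τ) w

/-- Sites are 0-based here, and sites `≥ L` of the block impose no condition. -/
def blockSum (L n s j : ℕ) : ℝ :=
  ∑ τ ∈ (Y L n).filter (fun τ => ∀ t : Fin L, s ≤ t → t < s + j → τ t = 1),
    pairing v (List.ofFn τ) w

lemma blockSum_zero (L n s : ℕ) : blockSum v w L n s 0 = weightSum v w L n := by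
  rw [blockSum, weightSum, Finset.filter_true_of_mem fun τ _ t h h' => by omega]

lemma cons_block_iff {L s j : ℕ} (a : Fin 3) (σ : Fin L → Fin 3) :
    (∀ t : Fin (L + 1), s + 1 ≤ t → t < s + 1 + j → (Fin.cons a σ : Fin (L + 1) → Fin 3) t = 1)
      ↔ ∀ t : Fin L, s ≤ t → t < s + j → σ t = 1 := by
  simp [Fin.forall_fin_succ, add_right_comm s 1 j]

lemma cons_front_block_iff {L j : ℕ} (a : Fin 3) (σ : Fin L → Fin 3) :
    (∀ t : Fin (L + 1), t < j + 1 → (Fin.cons a σ : Fin (L + 1) → Fin 3) t = 1)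
      ↔ a = 1 ∧ ∀ t : Fin L, t < j → σ t = 1 := by
  simp [Fin.forall_fin_succ]

lemma blockSum_succ (L n s j : ℕ) :
    blockSum v w (L + 1) (n + 1) (s + 1) j
      = blockSum (rowMul v X0) w L (n + 1) s j + blockSum (rowMul v X1) w L (n + 1) s j
        + blockSum (rowMul v X2) w L n s j := by
  simp only [blockSum, Finset.sum_filter]
  rw [sum_Y_succ]
  simp only [cons_block_iff, pairing_cons]
  rfl

lemma blockSum_front (L n j : ℕ) :
    blockSum v w (L + 1) (n + 1) 0 (j + 1) = blockSum (rowMul v X1) w L (n + 1) 0 j := by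
  simp only [blockSum, Finset.sum_filter]
  rw [sum_Y_succ]
  simp only [zero_le, zero_add, true_implies, cons_front_block_iff, pairing_cons]
  simp only [Fin.isValue, zero_ne_one, false_and, ↓reduceIte, Finset.sum_const_zero, true_and,
    zero_add, Fin.reduceEq, add_zero]
  rfl

lemma weightSum_succ (L n : ℕ) :
    weightSum v w (L + 1) (n + 1)
      = weightSum (rowMul v X0) w L (n + 1) + weightSum (rowMul v X1) w L (n + 1)
        + weightSum (rowMul v X2) w L n := by
  simpa only [blockSum_zero] using blockSum_succ v w L n 0 0

lemma two_mem_ofFn_of_mem_Y {L n : ℕ} {τ : Fin L → Fin 3} (hτ : τ ∈ Y L (n + 1)) :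
    2 ∈ List.ofFn τ := by
  have hcard : numTwos τ = n + 1 := (Finset.mem_filter.mp hτ).2
  obtain ⟨t, ht⟩ := Finset.card_pos.mp (show 0 < numTwos τ by omega)
  exact List.mem_ofFn.mpr ⟨t, (Finset.mem_filter.mp ht).2⟩

lemma weightSum_add (v' : ℕ → ℝ) (L n : ℕ) :
    weightSum (v + v') w L (n + 1) = weightSum v w L (n + 1) + weightSum v' w L (n + 1) := by
  rw [weightSum, weightSum, weightSum, ← Finset.sum_add_distrib]
  exact Finset.sum_congr rfl fun τ hτ => pairing_add (two_mem_ofFn_of_mem_Y hτ) v v' w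

lemma weightSum_rowMul_X1 (L n : ℕ) :
    weightSum (rowMul v X1) w (L + 1) (n + 1)
      = weightSum (rowMul (rowMul v X1) X1) w L (n + 1) + weightSum v w (L + 1) (n + 1) := by
  rw [weightSum_succ, weightSum_succ, rowMul_X1_X0, rowMul_X1_X2, weightSum_add]
  ring

lemma blockSum_front_rec {L n j : ℕ} (hL : j + 1 < L) :
    blockSum v w L (n + 1) 0 (j + 1)
      = blockSum v w L (n + 1) 0 (j + 2) + blockSum v w (L - 1) (n + 1) 0 j := by
  induction j generalizing v L with
  | zero =>
    obtain ⟨K, rfl⟩ : ∃ K, L = K + 1 + 1 := ⟨L - 2, by omega⟩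
    rw [blockSum_front, blockSum_front, blockSum_front, Nat.add_sub_cancel]
    simp only [blockSum_zero]
    exact weightSum_rowMul_X1 v w K n
  | succ j ih =>
    obtain ⟨K, rfl⟩ : ∃ K, L = K + 1 + 1 := ⟨L - 2, by omega⟩
    rw [blockSum_front v w (K + 1) n (j + 1), ih (rowMul v X1) (by omega),
      blockSum_front v w (K + 1) n (j + 2), Nat.add_sub_cancel, Nat.add_sub_cancel,
      blockSum_front v w K n j]

lemma blockSum_rec {L n s j : ℕ} (hn : s < n) (hL : s + j + 1 < L) :
    blockSum v w L n s (j + 1) = blockSum v w L n s (j + 2) + blockSum v w (L - 1) n s j := by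
  induction s generalizing v L n with
  | zero =>
    obtain ⟨m, rfl⟩ : ∃ m, n = m + 1 := ⟨n - 1, by omega⟩
    exact blockSum_front_rec v w (by omega)
  | succ s ih =>
    obtain ⟨m, rfl⟩ : ∃ m, n = m + 1 := ⟨n - 1, by omega⟩
    obtain ⟨K, rfl⟩ : ∃ K, L = K + 1 + 1 := ⟨L - 2, by omega⟩
    rw [Nat.add_sub_cancel]
    simp only [blockSum_succ]
    rw [ih (rowMul v X0) (L := K + 1) (n := m + 1) (by omega) (by omega),
      ih (rowMul v X1) (L := K + 1) (n := m + 1) (by omega) (by omega),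
      ih (rowMul v X2) (L := K + 1) (n := m) (by omega) (by omega), Nat.add_sub_cancel]
    ring

lemma card_filter_block {L s j : ℕ} (h : s + j ≤ L) :
    (Finset.univ.filter fun t : Fin L => s ≤ (t : ℕ) ∧ (t : ℕ) < s + j).card = j := by
  have hmap : (Finset.univ.filter fun t : Fin L => s ≤ (t : ℕ) ∧ (t : ℕ) < s + j).map
      Fin.valEmbedding = Finset.Ico s (s + j) := by
    ext x
    simp only [Finset.mem_map, Finset.mem_filter, Finset.mem_univ, true_and, Fin.valEmbedding_apply,
      Finset.mem_Ico]
    exact ⟨fun ⟨t, ht, htx⟩ => htx ▸ ht, fun hx => ⟨⟨x, by omega⟩, hx, rfl⟩⟩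
  rw [← Finset.card_map, hmap, Nat.card_Ico, Nat.add_sub_cancel_left]

lemma blockSum_eq_zero {L n s j : ℕ} (hblock : s + j ≤ L) (hL : L < n + j) :
    blockSum v w L n s j = 0 := by
  rw [blockSum, Finset.filter_eq_empty_iff.mpr, Finset.sum_empty]
  intro τ hτ hones
  have hdisj : Disjoint (Finset.univ.filter fun t => τ t = 2)
      (Finset.univ.filter fun t : Fin L => s ≤ (t : ℕ) ∧ (t : ℕ) < s + j) :=
    Finset.disjoint_filter.mpr fun t _ htwo hB => by simp [hones t hB.1 hB.2] at htwo
  have hcard := (Finset.card_union_of_disjoint hdisj).symm.trans_le (Finset.card_le_univ _)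
  rw [card_filter_block hblock, Fintype.card_fin] at hcard
  have hn : numTwos τ = n := (Finset.mem_filter.mp hτ).2
  rw [numTwos] at hn
  omega

end BlockSums

section Catalan

lemma catC_zero (m : ℕ) : catC m 0 = 1 := by
  simp [catC, (by positivity : (m : ℝ) + 1 ≠ 0)]

lemma catC_succ_self (m : ℕ) : catC m (m + 1) = 0 := by
  simp [catC]

lemma catC_succ_eq_choose_sub_choose (m p : ℕ) :
    catC m (p + 1) = ((m + p + 1).choose (p + 1) : ℝ) - ((m + p + 1).choose p : ℝ) := by
  have key : ((m + p + 1).choose (p + 1) : ℝ) * (p + 1) = ((m + p + 1).choose p : ℝ) * (m + 1) := by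
    have h := Nat.choose_succ_right_eq (m + p + 1) p
    rw [show m + p + 1 - p = m + 1 by omega] at h
    exact_mod_cast h
  rw [catC, div_eq_iff (by positivity), ← add_assoc]
  push_cast
  linear_combination -key

lemma catC_succ_succ (q p : ℕ) : catC (q + 1) (p + 1) = catC (q + 1) p + catC q (p + 1) := by
  rcases p with _ | r
  · simp only [zero_add, catC_succ_eq_choose_sub_choose, add_zero, Nat.choose_one_right,
      Nat.choose_zero_right, Nat.cast_add, Nat.cast_one, catC_zero]
    ring
  · simp only [catC_succ_eq_choose_sub_choose]
    rw [show q + 1 + (r + 1) + 1 = q + r + 2 + 1 by ring, show q + 1 + r + 1 = q + r + 2 by ring,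
      show q + (r + 1) + 1 = q + r + 2 by ring, Nat.choose_succ_succ' (q + r + 2) (r + 1),
      Nat.choose_succ_succ' (q + r + 2) r]
    push_cast
    ring

lemma cCoeff_self (j : ℕ) : cCoeff j j = 1 := by
  rcases j with _ | j
  · simp [cCoeff]
  · simp [cCoeff, catC_zero]

lemma cCoeff_succ_succ {i k : ℕ} (hik : i < k) :
    cCoeff (i + 1) (k + 1) = cCoeff (i + 2) (k + 1) + cCoeff i k := by
  obtain ⟨p, rfl⟩ : ∃ p, k = i + p + 1 := ⟨k - i - 1, by omega⟩
  simp only [cCoeff, Nat.add_sub_cancel, add_eq_zero, one_ne_zero, two_ne_zero, and_false,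
    if_false]
  rw [show i + p + 1 + 1 - (i + 1) = p + 1 by omega, show i + p + 1 + 1 - (i + 2) = p by omega,
    catC_succ_succ]
  rcases i with _ | i
  · simp [catC_succ_self]
  · rw [if_neg (by omega), show i + 1 + p + 1 - (i + 1) = p + 1 by omega]

lemma sum_cCoeff_mul_succ (z : ℕ → ℝ) {i N : ℕ} (h : i ≤ N) :
    ∑ k ∈ Finset.Icc (i + 1) (N + 1), cCoeff (i + 1) k * z k
      = ∑ k ∈ Finset.Icc (i + 2) (N + 1), cCoeff (i + 2) k * z k
        + ∑ k ∈ Finset.Icc i N, cCoeff i k * z (k + 1) := by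
  have shift : ∀ (f : ℕ → ℝ) (a : ℕ),
      ∑ k ∈ Finset.Icc (a + 1) (N + 1), f k = ∑ k ∈ Finset.Icc a N, f (k + 1) := fun f a => by
    rw [← Finset.map_add_right_Icc, Finset.sum_map]
    rfl
  rw [shift, shift _ (i + 1), ← Finset.insert_Icc_add_one_left_eq_Icc h,
    Finset.sum_insert (by simp), Finset.sum_insert (by simp), cCoeff_self, cCoeff_self,
    Finset.sum_congr rfl fun k hk => by
      rw [cCoeff_succ_succ (Finset.mem_Icc.mp hk).1, add_mul], Finset.sum_add_distrib]
  ring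

end Catalan

theorem blockSum_eq_sum_cCoeff_mul_weightSum (v w : ℕ → ℝ) {L n s j : ℕ} (hs : s < n)
    (hnL : n ≤ L) (hj : j ≤ L - n + 1) :
    blockSum v w L n s j = ∑ k ∈ Finset.Icc j (L - n), cCoeff j k * weightSum v w (L - k) n := by
  rcases Nat.eq_zero_or_pos j with rfl | hj0
  · rw [blockSum_zero, Finset.sum_eq_single_of_mem 0 (by simp) fun k _ hk => by simp [cCoeff, hk],
      cCoeff_self, one_mul, Nat.sub_zero]
  obtain ⟨i, hji⟩ : ∃ i, j = i + 1 := ⟨j - 1, by omega⟩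
  rw [hji]
  obtain rfl | hi : i = L - n ∨ i < L - n := by omega
  · rw [blockSum_eq_zero v w (by omega) (by omega), Finset.Icc_eq_empty (by omega),
      Finset.sum_empty]
  obtain ⟨N, hN⟩ : ∃ N, L - n = N + 1 := ⟨L - n - 1, by omega⟩
  have hlong := blockSum_eq_sum_cCoeff_mul_weightSum v w (j := i + 2) hs hnL (by omega)
  have hshort := blockSum_eq_sum_cCoeff_mul_weightSum v w (L := L - 1) (j := i) hs (by omega)
    (by omega)
  rw [blockSum_rec v w (j := i) hs (by omega), hlong, hshort, hN, show L - 1 - n = N by omega,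
    sum_cCoeff_mul_succ _ (i := i) (by omega)]
  congr 1
  exact Finset.sum_congr rfl fun k _ => by rw [Nat.sub_sub, add_comm 1 k]
termination_by 2 * L - j

lemma val_eq_of_add_one_eq {L : ℕ} (τ : Fin L → Fin 3) {s : ℕ} (t : Fin L) (h : (t : ℕ) + 1 = s) :
    val τ s = τ t := by
  rw [val, dif_pos (by omega)]
  congr
  omega

lemma Z_eq_weightSum (α β : ℝ) (L n : ℕ) : Z α β L n = weightSum (W α) (V β) L n := rfl

lemma E_one_eq_blockSum (α β : ℝ) {L n i j : ℕ} (hi : 1 ≤ i) (hij : i + j ≤ L + 1) :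
    E α β L n 1 (fun _ => i) j = blockSum (W α) (V β) L n (i - 1) j := by
  refine Finset.sum_congr (Finset.filter_congr fun τ _ => ?_) fun _ _ => rfl
  simp only [Fin.forall_fin_one, Fin.val_zero, zero_add, ne_eq, not_true_eq_false,
    false_implies, true_implies, true_and, Finset.mem_range]
  constructor
  · intro h t hst hts
    rw [← h (t - (i - 1)) (by omega), val_eq_of_add_one_eq τ t (by omega)]
  · intro h t ht
    rw [val_eq_of_add_one_eq τ ⟨i - 1 + t, by omega⟩ (by simp; omega)]
    exact h _ (by simp) (by simp; omega)

theorem E1_formula_case2_general (α β : ℝ)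
    (L n i j : ℕ) (hnL : n < L)
    (hi1 : 1 ≤ i) (hin : i ≤ n) (hj : j ≤ L - n) :
    E α β L n 1 (fun _ => i) j
      = ∑ k ∈ Finset.Icc j (L - n), cCoeff j k * Z α β (L - k) n := by
  rw [E_one_eq_blockSum α β hi1 (by omega),
    blockSum_eq_sum_cCoeff_mul_weightSum _ _ (by omega) hnL.le (by omega)]
  simp only [Z_eq_weightSum]

/-- explicit formula for `E₁`, Case 2: for `1 ≤ i ≤ n` and
`0 ≤ j ≤ L − n`, `E₁(L,n;i;j) = Σ_{k=j}^{L−n} c_{j,k} Z^{α,β}(L−k,n)`. -/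
theorem E1_formula_case2 (α β : ℝ)
    (hα : α ∈ Set.Ioc (0 : ℝ) 1) (hβ : β ∈ Set.Ioc (0 : ℝ) 1)
    (L n i j : ℕ) (h0n : 0 < n) (hnL : n < L)
    (hi1 : 1 ≤ i) (hin : i ≤ n) (hj : j ≤ L - n) :
    E α β L n 1 (fun _ => i) j
      = ∑ k ∈ Finset.Icc j (L - n), cCoeff j k * Z α β (L - k) n :=
  E1_formula_case2_general α β L n i j hnL hi1 hin hj

end TASEP
end
end

section
/- (Pressure in region I) Fix γ ∈ (0,1) and α, β ∈ ((1−γ)/2, 1]. Let z_min = max{0, 1−2α, 1−2β} and for each positive integer n define f_n : (z_min, 1] → ℝ by f_n(z) = α(1+z)/(z(z+2α−1)) + n/z + β(1+z)/(z(z+2β−1)). Then for all sufficiently large n there is a unique z_n ∈ (z_min, 1] with f_n(z_n) = n/γ, and z_n → γ as n → ∞. -/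
/-! For `z` in the admissible range, `f_n(z) = n/z + g(z)` where the boundary contribution `g`
does not depend on `n`, and every term of `f_n` is strictly decreasing in `z`. Hence `f_n(z) = n/γ`
has at most one solution, and `f_n(z) - n/γ = n(1/z - 1/γ) + g(z)` tends to `+∞` for fixed
`z < γ` and to `-∞` for fixed `z > γ`. Since region I is exactly the condition `z_min < γ < 1`,
these barriers give a solution (by the intermediate value theorem) and trap it near `γ`. -/

open Filter Topology

noncomputable section

namespace TASEP

/-- The expected system length in the pressure ensemble with `n` second class
particles, as a function of `z = √(1 − e^{−p})`:
`f_n(z) = α(1+z)/(z(z+2α−1)) + n/z + β(1+z)/(z(z+2β−1))`. -/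
def expLength (α β : ℝ) (n : ℕ) (z : ℝ) : ℝ :=
  α * (1 + z) / (z * (z + 2 * α - 1)) + (n : ℝ) / z +
    β * (1 + z) / (z * (z + 2 * β - 1))

theorem _root_.StrictAntiOn.existsUnique_eq {f : ℝ → ℝ} {s : Set ℝ} [s.OrdConnected]
    (hf : StrictAntiOn f s) (hc : ContinuousOn f s) {a b y : ℝ} (ha : a ∈ s) (hb : b ∈ s)
    (hab : a ≤ b) (hy : y ∈ Set.Icc (f b) (f a)) : ∃! z, z ∈ s ∧ f z = y := by
  have hsub : Set.Icc a b ⊆ s := Set.OrdConnected.out ‹_› ha hb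
  obtain ⟨z, hz, rfl⟩ := intermediate_value_Icc' hab (hc.mono hsub) hy
  exact ⟨z, ⟨hsub hz, rfl⟩, fun w ⟨hw, hwz⟩ => hf.injOn hw (hsub hz) hwz⟩

def boundaryTerm (a z : ℝ) : ℝ :=
  a * (1 + z) / (z * (z + 2 * a - 1))

theorem expLength_eq (α β : ℝ) (n : ℕ) (z : ℝ) :
    expLength α β n z = n / z + (boundaryTerm α z + boundaryTerm β z) := by
  unfold expLength boundaryTerm
  ring

theorem boundaryTerm_strictAntiOn {a : ℝ} (ha : 0 < a) :
    StrictAntiOn (boundaryTerm a) (Set.Ioi (max 0 (1 - 2 * a))) := by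
  intro z₁ hz₁ z₂ hz₂ h
  simp only [Set.mem_Ioi, max_lt_iff] at hz₁ hz₂
  unfold boundaryTerm
  rw [div_lt_div_iff₀ (by nlinarith) (by nlinarith)]
  -- the cross-multiplied difference factors as `a (z₂ - z₁) (z₁ + z₂ + z₁ z₂ + 2a - 1)`
  nlinarith [mul_pos (mul_pos ha (sub_pos.2 h))
    (show 0 < z₁ + z₂ + z₁ * z₂ + (2 * a - 1) by nlinarith)]

theorem boundaryTerm_continuousOn (a : ℝ) :
    ContinuousOn (boundaryTerm a) (Set.Ioi (max 0 (1 - 2 * a))) := by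
  refine ContinuousOn.div (by fun_prop) (by fun_prop) fun z hz => ?_
  simp only [Set.mem_Ioi, max_lt_iff] at hz
  exact (mul_pos hz.1 (by linarith)).ne'

variable {α β : ℝ}

def admissible (α β : ℝ) : Set ℝ :=
  Set.Ioi (max (max 0 (1 - 2 * α)) (1 - 2 * β))

theorem admissible_subset_left : admissible α β ⊆ Set.Ioi (max 0 (1 - 2 * α)) :=
  Set.Ioi_subset_Ioi (le_max_left _ _)

theorem admissible_subset_right : admissible α β ⊆ Set.Ioi (max 0 (1 - 2 * β)) :=
  Set.Ioi_subset_Ioi (max_le_max_right _ (le_max_left _ _))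

theorem pos_of_mem_admissible {z : ℝ} (hz : z ∈ admissible α β) : 0 < z :=
  (le_max_left _ _).trans_lt (admissible_subset_left hz)

theorem expLength_strictAntiOn (n : ℕ) (hα : 0 < α) (hβ : 0 < β) :
    StrictAntiOn (expLength α β n) (admissible α β) := by
  intro z₁ hz₁ z₂ hz₂ h
  have hn : (n : ℝ) / z₂ ≤ n / z₁ := by
    have := pos_of_mem_admissible hz₁
    gcongr
  rw [expLength_eq, expLength_eq]
  linarith [boundaryTerm_strictAntiOn hα (admissible_subset_left hz₁)
      (admissible_subset_left hz₂) h,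
    boundaryTerm_strictAntiOn hβ (admissible_subset_right hz₁) (admissible_subset_right hz₂) h]

theorem expLength_continuousOn (n : ℕ) : ContinuousOn (expLength α β n) (admissible α β) := by
  have hn : ContinuousOn (fun z : ℝ => (n : ℝ) / z) (admissible α β) :=
    continuousOn_const.div continuousOn_id fun z hz => (pos_of_mem_admissible hz).ne'
  exact (hn.add (((boundaryTerm_continuousOn α).mono admissible_subset_left).add
    ((boundaryTerm_continuousOn β).mono admissible_subset_right))).congr
    fun z _ => expLength_eq α β n z

theorem expLength_sub_div (n : ℕ) (γ z : ℝ) :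
    expLength α β n z - n / γ =
      n * (1 / z - 1 / γ) + (boundaryTerm α z + boundaryTerm β z) := by
  rw [expLength_eq]
  ring

theorem eventually_div_lt_expLength {γ z : ℝ} (hz : 0 < z) (hzγ : z < γ) :
    ∀ᶠ n : ℕ in atTop, n / γ < expLength α β n z := by
  have hgap : 0 < 1 / z - 1 / γ := sub_pos.2 (one_div_lt_one_div_of_lt hz hzγ)
  refine ((tendsto_atTop_add_const_right _ (boundaryTerm α z + boundaryTerm β z)
    (tendsto_natCast_atTop_atTop.atTop_mul_const hgap)).eventually_gt_atTop 0).mono fun n hn => ?_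
  rwa [← sub_pos, expLength_sub_div]

theorem eventually_expLength_lt_div {γ z : ℝ} (hγ : 0 < γ) (hγz : γ < z) :
    ∀ᶠ n : ℕ in atTop, expLength α β n z < n / γ := by
  have hgap : 1 / z - 1 / γ < 0 := sub_neg.2 (one_div_lt_one_div_of_lt hγ hγz)
  refine ((tendsto_atBot_add_const_right _ (boundaryTerm α z + boundaryTerm β z)
    (tendsto_natCast_atTop_atTop.atTop_mul_const_of_neg hgap)).eventually_lt_atBot 0).mono
    fun n hn => ?_
  rwa [← sub_neg, expLength_sub_div]

theorem eventually_gt_of_expLength_eq (hα : 0 < α) (hβ : 0 < β) {γ c : ℝ}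
    (hc : c ∈ admissible α β) (hcγ : c < γ) {zs : ℕ → ℝ}
    (hzs : ∀ᶠ n : ℕ in atTop,
      zs n ∈ admissible α β ∧ expLength α β n (zs n) = n / γ) :
    ∀ᶠ n : ℕ in atTop, c < zs n := by
  filter_upwards [hzs, eventually_div_lt_expLength (pos_of_mem_admissible hc) hcγ]
    with n ⟨hzn, hfz⟩ hn
  rwa [← hfz, (expLength_strictAntiOn n hα hβ).lt_iff_gt hzn hc] at hn

theorem eventually_lt_of_expLength_eq (hα : 0 < α) (hβ : 0 < β) {γ c : ℝ}
    (hc : c ∈ admissible α β) (hγ : 0 < γ) (hγc : γ < c) {zs : ℕ → ℝ}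
    (hzs : ∀ᶠ n : ℕ in atTop,
      zs n ∈ admissible α β ∧ expLength α β n (zs n) = n / γ) :
    ∀ᶠ n : ℕ in atTop, zs n < c := by
  filter_upwards [hzs, eventually_expLength_lt_div hγ hγc] with n ⟨hzn, hfz⟩ hn
  rwa [← hfz, (expLength_strictAntiOn n hα hβ).lt_iff_gt hc hzn] at hn

/-- pressure in region I: for `γ ∈ (0,1)` and
`α, β ∈ ((1−γ)/2, 1]`, for all sufficiently large `n` there is a unique
`z_n ∈ (z_min, 1]` with `f_n(z_n) = n/γ`, where
`z_min = max{0, 1−2α, 1−2β}`, and `z_n → γ` as `n → ∞`. -/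
theorem pressure_region_I (γ α β : ℝ)
    (hγ : γ ∈ Set.Ioo (0 : ℝ) 1)
    (hα : α ∈ Set.Ioc ((1 - γ) / 2) 1) (hβ : β ∈ Set.Ioc ((1 - γ) / 2) 1) :
    (∀ᶠ n : ℕ in atTop,
      ∃! z : ℝ, z ∈ Set.Ioc (max (max 0 (1 - 2 * α)) (1 - 2 * β)) 1 ∧
        expLength α β n z = (n : ℝ) / γ) ∧
    (∀ zs : ℕ → ℝ,
      (∀ᶠ n : ℕ in atTop,
        zs n ∈ Set.Ioc (max (max 0 (1 - 2 * α)) (1 - 2 * β)) 1 ∧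
          expLength α β n (zs n) = (n : ℝ) / γ) →
      Tendsto zs atTop (𝓝 γ)) := by
  obtain ⟨hγ0, hγ1⟩ := hγ
  have hα0 : 0 < α := by linarith [hα.1]
  have hβ0 : 0 < β := by linarith [hβ.1]
  set m := max (max 0 (1 - 2 * α)) (1 - 2 * β)
  have hmγ : m < γ := max_lt (max_lt hγ0 (by linarith [hα.1])) (by linarith [hβ.1])
  have hIoc : Set.Ioc m 1 ⊆ admissible α β := Set.Ioc_subset_Ioi_self
  have hmid : (m + γ) / 2 ∈ Set.Ioc m 1 := ⟨by linarith, by linarith⟩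
  refine ⟨?_, fun zs hzs => ?_⟩
  · filter_upwards [eventually_div_lt_expLength (pos_of_mem_admissible (hIoc hmid))
      (by linarith : (m + γ) / 2 < γ), eventually_expLength_lt_div hγ0 hγ1] with n hmid' h1
    exact ((expLength_strictAntiOn n hα0 hβ0).mono hIoc).existsUnique_eq
      ((expLength_continuousOn n).mono hIoc) hmid ⟨hmγ.trans hγ1, le_rfl⟩ hmid.2
      ⟨h1.le, hmid'.le⟩
  replace hzs : ∀ᶠ n : ℕ in atTop,
      zs n ∈ admissible α β ∧ expLength α β n (zs n) = n / γ :=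
    hzs.mono fun n h => ⟨hIoc h.1, h.2⟩
  refine tendsto_order.2 ⟨fun b hb => ?_, fun b hb => ?_⟩
  · have hc : m < max b ((m + γ) / 2) := lt_max_of_lt_right hmid.1
    exact (eventually_gt_of_expLength_eq hα0 hβ0 hc (max_lt hb (by linarith)) hzs).mono
      fun n h => (le_max_left _ _).trans_lt h
  · have hc : γ < min b 1 := lt_min hb hγ1
    exact (eventually_lt_of_expLength_eq hα0 hβ0 (hmγ.trans hc) hγ0 hc hzs).mono
      fun n h => h.trans_le (min_le_left _ _)

end TASEP
end
end
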